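/- Let H₀ and H be self-adjoint operators on a Hilbert space ℋ, let A, B be bounded operators on ℋ with B H₀-smooth and A H-smooth (i.e., ∫‖Be^{-itH₀}u‖²dt ≤ C‖u‖² and ∫‖Ae^{-itH}u‖²dt ≤ C‖u‖²), and suppose H = H₀ + B*A in the quadratic form sense. Then for all u₀ ∈ ℋ and t ∈ ℝ, the Duhamel formula holds: e^{-itH}u₀ = e^{-itH₀}u₀ − i∫₀^t e^{-i(t−s)H₀}B*A e^{-isH}u₀ ds (as an identity of ℋ-valued integrals). -/

import Mathlib

/-!
For `u ∈ dom H`, the group `U` maps `u` into `dom H = dom H₀` and commutes with `H` there (this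
is where self-adjointness of `H` enters), so `s ↦ U₀ (t - s) (U s u)` is differentiable with
derivative `-i U₀ (t - s) (B* A (U s u))`: the contributions of `H₀` cancel. Integrating over
`[0, t]` gives the formula on `dom H`. Both sides are continuous in `u`, because a uniformly bounded
family of operators that is strongly continuous on a dense set is jointly continuous, so the
formula extends to all of `ℋ`.
-/

open MeasureTheory Filter Topology
open scoped InnerProductSpace

section OperatorFamily

variable {𝕜 E F : Type*} [NontriviallyNormedField 𝕜]
  [NormedAddCommGroup E] [NormedSpace 𝕜 E] [NormedAddCommGroup F] [NormedSpace 𝕜 F]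

theorem continuous_uncurry_of_norm_le {X : Type*} [TopologicalSpace X] {T : X → E →L[𝕜] F}
    {C : ℝ} (hT : ∀ x, ‖T x‖ ≤ C) (hcont : ∀ v, Continuous fun x => T x v) :
    Continuous fun p : X × E => T p.1 p.2 := by
  rw [continuous_iff_continuousAt]
  rintro ⟨x₀, v₀⟩
  have hsmall : Tendsto (fun p : X × E => T p.1 (p.2 - v₀)) (𝓝 (x₀, v₀)) (𝓝 0) := by
    refine squeeze_zero_norm (fun p => ((T p.1).le_opNorm _).trans
      (mul_le_mul_of_nonneg_right (hT p.1) (norm_nonneg _))) ?_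
    simpa using
      ((continuous_snd.sub (continuous_const (y := v₀))).norm.const_mul C).tendsto (x₀, v₀)
  have hmain : Tendsto (fun p : X × E => T p.1 v₀) (𝓝 (x₀, v₀)) (𝓝 (T x₀ v₀)) :=
    ((hcont v₀).comp continuous_fst).tendsto (x₀, v₀)
  simpa [ContinuousAt] using hsmall.add hmain

theorem continuous_apply_of_dense {X : Type*} [TopologicalSpace X] {T : X → E →L[𝕜] F}
    {C : ℝ} (hT : ∀ x, ‖T x‖ ≤ C) {D : Set E} (hD : Dense D)
    (hcont : ∀ v ∈ D, Continuous fun x => T x v) (v : E) : Continuous fun x => T x v := by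
  have hequi : Equicontinuous ((↑) ∘ T : X → E → F) :=
    ((NormedSpace.equicontinuous_TFAE T).out 5 1).mp (⟨C, hT⟩ : ∃ C, ∀ x, ‖T x‖ ≤ C)
  rw [continuous_iff_continuousAt]
  intro x₀
  have hclosed := hequi.isClosed_setOfPred_tendsto (l := 𝓝 x₀) (T x₀).continuous
  exact hclosed.closure_subset_iff.mpr (fun w hw => (hcont w hw).continuousAt)
    (hD.closure_eq.symm ▸ Set.mem_univ v)

theorem hasDerivAt_apply_of_continuousAt_uncurry {R : Type*} [Semiring R] [Module R E]
    [Module R F] [SMul 𝕜 R] [IsScalarTower 𝕜 R E] [IsScalarTower 𝕜 R F] {T : 𝕜 → E →L[R] F}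
    {h : 𝕜 → E} {h' : E} {k : F} {s₀ : 𝕜} (hT : ContinuousAt (fun p : 𝕜 × E => T p.1 p.2) (s₀, h'))
    (hh : HasDerivAt h h' s₀) (hk : HasDerivAt (fun s => T s (h s₀)) k s₀) :
    HasDerivAt (fun s => T s (h s)) (T s₀ h' + k) s₀ := by
  have hincr : HasDerivAt (fun s => T s (h s - h s₀)) (T s₀ h') s₀ := by
    rw [hasDerivAt_iff_tendsto_slope]
    have hslope : Tendsto (fun s => T s (slope h s₀ s)) (𝓝[≠] s₀) (𝓝 (T s₀ h')) :=
      hT.tendsto.comp ((tendsto_nhdsWithin_of_tendsto_nhds tendsto_id).prodMk_nhds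
        (hasDerivAt_iff_tendsto_slope.mp hh))
    refine hslope.congr fun s => ?_
    simp only [slope_def_module, sub_self, map_zero, sub_zero,
      ContinuousLinearMap.map_smul_of_tower]
  simpa only [map_sub, Pi.add_def, sub_add_cancel] using hincr.add hk

end OperatorFamily

section UnitaryGroup

variable {ℋ : Type*} [NormedAddCommGroup ℋ] [InnerProductSpace ℂ ℋ]
  {H : ℋ →ₗ.[ℂ] ℋ} {U : ℝ → ℋ →L[ℂ] ℋ}

theorem apply_apply_neg (hU0 : U 0 = ContinuousLinearMap.id ℂ ℋ)
    (hUadd : ∀ s t : ℝ, U (s + t) = (U s).comp (U t)) (s : ℝ) (v : ℋ) :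
    U s (U (-s) v) = v := by
  rw [← ContinuousLinearMap.comp_apply, ← hUadd, add_neg_cancel, hU0,
    ContinuousLinearMap.id_apply]

theorem inner_apply_generator_eq (hU0 : U 0 = ContinuousLinearMap.id ℂ ℋ)
    (hUadd : ∀ s t : ℝ, U (s + t) = (U s).comp (U t))
    (hUiso : ∀ (t : ℝ) (u : ℋ), ‖U t u‖ = ‖u‖)
    (hUgen : ∀ u : H.domain, ∀ t : ℝ,
      HasDerivAt (fun τ : ℝ => U τ (u : ℋ)) (-(Complex.I • U t (H u))) t)
    (u v : H.domain) (s : ℝ) : ⟪U s (H u), (v : ℋ)⟫_ℂ = ⟪U s (u : ℋ), H v⟫_ℂ := by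
  have hforward : HasDerivAt (fun τ : ℝ => U τ (U s u)) (-(Complex.I • U s (H u))) 0 := by
    have := HasDerivAt.comp_add_const (f := fun τ : ℝ => U τ (u : ℋ)) 0 s
      (by simpa using hUgen u s)
    refine this.congr_of_eventuallyEq (Eventually.of_forall fun τ => ?_)
    simp only [hUadd, ContinuousLinearMap.comp_apply]
  have hbackward : HasDerivAt (fun τ : ℝ => U (-τ) v) (Complex.I • H v) 0 := by
    have := HasDerivAt.comp_const_sub (f := fun τ : ℝ => U τ (v : ℋ)) 0 0
      (by simpa using hUgen v 0)
    simpa only [zero_sub, hU0, ContinuousLinearMap.id_apply, neg_neg] using this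
  -- differentiate `⟪v, U τ (U s u)⟫ = ⟪U (-τ) v, U s u⟫` at `τ = 0`
  have hright := (hasDerivAt_const (0 : ℝ) (v : ℋ)).inner ℂ hforward
  have hleft := hbackward.inner ℂ (hasDerivAt_const (0 : ℝ) (U s u))
  have hsame : (fun τ : ℝ => ⟪(v : ℋ), U τ (U s u)⟫_ℂ) = fun τ => ⟪U (-τ) v, U s u⟫_ℂ := by
    funext τ
    rw [← LinearIsometry.inner_map_map ⟨(U τ).toLinearMap, hUiso τ⟩ (U (-τ) v)]
    simp [apply_apply_neg hU0 hUadd]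
  rw [hsame] at hright
  have h := hright.unique hleft
  simp only [inner_zero_left, inner_zero_right, zero_add, add_zero, inner_neg_right,
    inner_smul_right, inner_smul_left, Complex.conj_I, neg_mul] at h
  rw [← inner_conj_symm, mul_left_cancel₀ Complex.I_ne_zero (neg_injective h), inner_conj_symm]

theorem exists_mem_domain_apply_eq_of_isSelfAdjoint [CompleteSpace ℋ] (hH : IsSelfAdjoint H)
    (hU0 : U 0 = ContinuousLinearMap.id ℂ ℋ)
    (hUadd : ∀ s t : ℝ, U (s + t) = (U s).comp (U t))
    (hUiso : ∀ (t : ℝ) (u : ℋ), ‖U t u‖ = ‖u‖)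
    (hUgen : ∀ u : H.domain, ∀ t : ℝ,
      HasDerivAt (fun τ : ℝ => U τ (u : ℋ)) (-(Complex.I • U t (H u))) t)
    (u : H.domain) (s : ℝ) :
    ∃ hm : U s (u : ℋ) ∈ H.domain, H ⟨U s u, hm⟩ = U s (H u) := by
  have hinner := fun v => inner_apply_generator_eq hU0 hUadd hUiso hUgen u v s
  have hadj : H.adjoint = H := LinearPMap.isSelfAdjoint_def.mp hH
  have hmem : U s (u : ℋ) ∈ H.adjoint.domain :=
    LinearPMap.mem_adjoint_domain_of_exists _ ⟨_, hinner⟩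
  have happly := LinearPMap.adjoint_apply_eq hH.dense_domain ⟨_, hmem⟩ hinner
  revert hmem happly
  rw [hadj]
  exact fun hmem happly => ⟨hmem, happly⟩

theorem continuous_uncurry_of_hasDerivAt (hH : Dense (H.domain : Set ℋ))
    (hUiso : ∀ (t : ℝ) (u : ℋ), ‖U t u‖ = ‖u‖)
    (hUgen : ∀ u : H.domain, ∀ t : ℝ,
      HasDerivAt (fun τ : ℝ => U τ (u : ℋ)) (-(Complex.I • U t (H u))) t) :
    Continuous fun p : ℝ × ℋ => U p.1 p.2 := by
  have hbound (t : ℝ) : ‖U t‖ ≤ 1 :=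
    (U t).opNorm_le_bound zero_le_one fun u => by rw [hUiso, one_mul]
  refine continuous_uncurry_of_norm_le hbound (continuous_apply_of_dense hbound hH fun v hv => ?_)
  exact continuous_iff_continuousAt.2 fun τ => (hUgen ⟨v, hv⟩ τ).continuousAt

end UnitaryGroup

section Duhamel

variable {ℋ : Type*} [NormedAddCommGroup ℋ] [InnerProductSpace ℂ ℋ]
  {H₀ H : ℋ →ₗ.[ℂ] ℋ} {U₀ U : ℝ → ℋ →L[ℂ] ℋ} {V : ℋ →L[ℂ] ℋ}

theorem hasDerivAt_duhamel [CompleteSpace ℋ] (hH₀ : Dense (H₀.domain : Set ℋ))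
    (hH : IsSelfAdjoint H)
    (hdom : H.domain = H₀.domain)
    (hsum : ∀ (u : ℋ) (hu : u ∈ H₀.domain), H ⟨u, hdom ▸ hu⟩ = H₀ ⟨u, hu⟩ + V u)
    (hU₀iso : ∀ (t : ℝ) (u : ℋ), ‖U₀ t u‖ = ‖u‖)
    (hU₀gen : ∀ u : H₀.domain, ∀ t : ℝ,
      HasDerivAt (fun τ : ℝ => U₀ τ (u : ℋ)) (-(Complex.I • U₀ t (H₀ u))) t)
    (hU0 : U 0 = ContinuousLinearMap.id ℂ ℋ)
    (hUadd : ∀ s t : ℝ, U (s + t) = (U s).comp (U t))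
    (hUiso : ∀ (t : ℝ) (u : ℋ), ‖U t u‖ = ‖u‖)
    (hUgen : ∀ u : H.domain, ∀ t : ℝ,
      HasDerivAt (fun τ : ℝ => U τ (u : ℋ)) (-(Complex.I • U t (H u))) t)
    (u : H.domain) (t s : ℝ) :
    HasDerivAt (fun σ => U₀ (t - σ) (U σ u)) (-(Complex.I • U₀ (t - s) (V (U s u)))) s := by
  obtain ⟨hm, hcomm⟩ :=
    exists_mem_domain_apply_eq_of_isSelfAdjoint hH hU0 hUadd hUiso hUgen u s
  have hm₀ : U s (u : ℋ) ∈ H₀.domain := hdom ▸ hm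
  have hH₀apply : H₀ ⟨U s u, hm₀⟩ = U s (H u) - V (U s u) :=
    eq_sub_of_add_eq ((hsum _ hm₀).symm.trans hcomm)
  have hT : ContinuousAt (fun p : ℝ × ℋ => U₀ (t - p.1) p.2) (s, -(Complex.I • U s (H u))) :=
    ((continuous_uncurry_of_hasDerivAt hH₀ hU₀iso hU₀gen).comp
      ((continuous_const.sub continuous_fst).prodMk continuous_snd)).continuousAt
  have hk : HasDerivAt (fun σ => U₀ (t - σ) (U s u))
      (Complex.I • U₀ (t - s) (H₀ ⟨U s u, hm₀⟩)) s := by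
    simpa using (hU₀gen ⟨_, hm₀⟩ (t - s)).comp_const_sub t s
  convert hasDerivAt_apply_of_continuousAt_uncurry (T := fun σ : ℝ => U₀ (t - σ)) hT
    (hUgen u s) hk using 1
  rw [hH₀apply]
  simp only [map_sub, map_neg, map_smul, smul_sub]
  abel

theorem continuous_duhamel_integrand (hU₀ : Continuous fun p : ℝ × ℋ => U₀ p.1 p.2)
    (hU : Continuous fun p : ℝ × ℋ => U p.1 p.2) (t : ℝ) :
    Continuous fun p : ℋ × ℝ => U₀ (t - p.2) (V (U p.2 p.1)) :=
  hU₀.comp ((continuous_const.sub continuous_snd).prodMk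
    (V.continuous.comp (hU.comp (continuous_snd.prodMk continuous_fst))))

theorem duhamel_formula [CompleteSpace ℋ] (hH₀ : Dense (H₀.domain : Set ℋ)) (hH : IsSelfAdjoint H)
    (hdom : H.domain = H₀.domain)
    (hsum : ∀ (u : ℋ) (hu : u ∈ H₀.domain), H ⟨u, hdom ▸ hu⟩ = H₀ ⟨u, hu⟩ + V u)
    (hU₀0 : U₀ 0 = ContinuousLinearMap.id ℂ ℋ)
    (hU₀iso : ∀ (t : ℝ) (u : ℋ), ‖U₀ t u‖ = ‖u‖)
    (hU₀gen : ∀ u : H₀.domain, ∀ t : ℝ,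
      HasDerivAt (fun τ : ℝ => U₀ τ (u : ℋ)) (-(Complex.I • U₀ t (H₀ u))) t)
    (hU0 : U 0 = ContinuousLinearMap.id ℂ ℋ)
    (hUadd : ∀ s t : ℝ, U (s + t) = (U s).comp (U t))
    (hUiso : ∀ (t : ℝ) (u : ℋ), ‖U t u‖ = ‖u‖)
    (hUgen : ∀ u : H.domain, ∀ t : ℝ,
      HasDerivAt (fun τ : ℝ => U τ (u : ℋ)) (-(Complex.I • U t (H u))) t)
    (t : ℝ) (u : ℋ) :
    U t u = U₀ t u - Complex.I • ∫ s in (0 : ℝ)..t, U₀ (t - s) (V (U s u)) := by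
  have hF := continuous_duhamel_integrand (V := V) (t := t)
    (continuous_uncurry_of_hasDerivAt hH₀ hU₀iso hU₀gen)
    (continuous_uncurry_of_hasDerivAt hH.dense_domain hUiso hUgen)
  have hdomain (u : H.domain) :
      U t u = U₀ t u - Complex.I • ∫ s in (0 : ℝ)..t, U₀ (t - s) (V (U s u)) := by
    have hFTC := intervalIntegral.integral_eq_sub_of_hasDerivAt
      (fun s _ => hasDerivAt_duhamel hH₀ hH hdom hsum hU₀iso hU₀gen hU0 hUadd hUiso hUgen u t s)
      (((hF.comp (continuous_const.prodMk continuous_id)).const_smul Complex.I).neg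
        |>.intervalIntegrable 0 t)
    simp only [intervalIntegral.integral_neg, intervalIntegral.integral_smul, sub_self, sub_zero,
      hU₀0, hU0, ContinuousLinearMap.id_apply] at hFTC
    exact (sub_eq_iff_eq_add'.mp hFTC.symm).trans (sub_eq_add_neg _ _).symm
  have hcont : Continuous fun u : ℋ =>
      U₀ t u - Complex.I • ∫ s in (0 : ℝ)..t, U₀ (t - s) (V (U s u)) :=
    (U₀ t).continuous.sub
      ((intervalIntegral.continuous_parametric_intervalIntegral_of_continuous' hF 0 t).const_smul
        Complex.I)
  exact congrFun (Continuous.ext_on hH.dense_domain (U t).continuous hcont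
    fun u hu => hdomain ⟨u, hu⟩) u

end Duhamel

theorem stmt14_general {ℋ : Type*} [NormedAddCommGroup ℋ] [InnerProductSpace ℂ ℋ] [CompleteSpace ℋ]
    (H₀ H : ℋ →ₗ.[ℂ] ℋ) (hH₀ : IsSelfAdjoint H₀) (hH : IsSelfAdjoint H)
    (A B : ℋ →L[ℂ] ℋ)
    -- `H = H₀ + B*A`
    (hdom : H.domain = H₀.domain)
    (hsum : ∀ (u : ℋ) (hu : u ∈ H₀.domain),
      H ⟨u, hdom ▸ hu⟩ = H₀ ⟨u, hu⟩ + (ContinuousLinearMap.adjoint B) (A u))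
    -- the unitary group generated by `H₀`
    (U₀ : ℝ → ℋ →L[ℂ] ℋ)
    (hU₀0 : U₀ 0 = ContinuousLinearMap.id ℂ ℋ)
    (hU₀iso : ∀ (t : ℝ) (u : ℋ), ‖U₀ t u‖ = ‖u‖)
    (hU₀gen : ∀ u : H₀.domain, ∀ t : ℝ,
      HasDerivAt (fun τ : ℝ => U₀ τ (u : ℋ)) (-(Complex.I • U₀ t (H₀ u))) t)
    -- the unitary group generated by `H`
    (U : ℝ → ℋ →L[ℂ] ℋ)
    (hU0 : U 0 = ContinuousLinearMap.id ℂ ℋ)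
    (hUadd : ∀ s t : ℝ, U (s + t) = (U s).comp (U t))
    (hUiso : ∀ (t : ℝ) (u : ℋ), ‖U t u‖ = ‖u‖)
    (hUgen : ∀ u : H.domain, ∀ t : ℝ,
      HasDerivAt (fun τ : ℝ => U τ (u : ℋ)) (-(Complex.I • U t (H u))) t) :
    ∀ (u₀ : ℋ) (t : ℝ),
      U t u₀ = U₀ t u₀ - Complex.I •
        ∫ s in (0 : ℝ)..t, U₀ (t - s) ((ContinuousLinearMap.adjoint B) (A (U s u₀))) :=
  fun u₀ t => duhamel_formula (V := (ContinuousLinearMap.adjoint B).comp A) hH₀.dense_domain hH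
    hdom hsum hU₀0 hU₀iso hU₀gen hU0 hUadd hUiso hUgen t u₀

/-- Duhamel formula for the Rodnianski–Schlag method: if `H₀` and `H = H₀ + B*A`
are self-adjoint (given with their unitary groups `U₀ t = e^{-itH₀}` and `U t = e^{-itH}`),
`A, B` are bounded, `B` is `H₀`-smooth and `A` is `H`-smooth, then for all `u₀` and `t`,
`e^{-itH}u₀ = e^{-itH₀}u₀ - i ∫₀ᵗ e^{-i(t-s)H₀} B* A e^{-isH} u₀ ds`. -/
theorem stmt14 {ℋ : Type*} [NormedAddCommGroup ℋ] [InnerProductSpace ℂ ℋ] [CompleteSpace ℋ]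
    (H₀ H : ℋ →ₗ.[ℂ] ℋ) (hH₀ : IsSelfAdjoint H₀) (hH : IsSelfAdjoint H)
    (A B : ℋ →L[ℂ] ℋ)
    -- `H = H₀ + B*A`
    (hdom : H.domain = H₀.domain)
    (hsum : ∀ (u : ℋ) (hu : u ∈ H₀.domain),
      H ⟨u, hdom ▸ hu⟩ = H₀ ⟨u, hu⟩ + (ContinuousLinearMap.adjoint B) (A u))
    -- the unitary group generated by `H₀`
    (U₀ : ℝ → ℋ →L[ℂ] ℋ)
    (hU₀0 : U₀ 0 = ContinuousLinearMap.id ℂ ℋ)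
    (hU₀add : ∀ s t : ℝ, U₀ (s + t) = (U₀ s).comp (U₀ t))
    (hU₀iso : ∀ (t : ℝ) (u : ℋ), ‖U₀ t u‖ = ‖u‖)
    (hU₀gen : ∀ u : H₀.domain, ∀ t : ℝ,
      HasDerivAt (fun τ : ℝ => U₀ τ (u : ℋ)) (-(Complex.I • U₀ t (H₀ u))) t)
    -- the unitary group generated by `H`
    (U : ℝ → ℋ →L[ℂ] ℋ)
    (hU0 : U 0 = ContinuousLinearMap.id ℂ ℋ)
    (hUadd : ∀ s t : ℝ, U (s + t) = (U s).comp (U t))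
    (hUiso : ∀ (t : ℝ) (u : ℋ), ‖U t u‖ = ‖u‖)
    (hUgen : ∀ u : H.domain, ∀ t : ℝ,
      HasDerivAt (fun τ : ℝ => U τ (u : ℋ)) (-(Complex.I • U t (H u))) t)
    -- `B` is `H₀`-smooth and `A` is `H`-smooth
    (C₀ C₁ : ℝ)
    (hBsmooth : ∀ u : ℋ, ∫ t : ℝ, ‖B (U₀ t u)‖ ^ 2 ≤ C₀ * ‖u‖ ^ 2)
    (hAsmooth : ∀ u : ℋ, ∫ t : ℝ, ‖A (U t u)‖ ^ 2 ≤ C₁ * ‖u‖ ^ 2) :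
    ∀ (u₀ : ℋ) (t : ℝ),
      U t u₀ = U₀ t u₀ - Complex.I •
        ∫ s in (0 : ℝ)..t, U₀ (t - s) ((ContinuousLinearMap.adjoint B) (A (U s u₀))) :=
  stmt14_general H₀ H hH₀ hH A B hdom hsum U₀ hU₀0 hU₀iso hU₀gen U hU0 hUadd hUiso hUgen
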